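/- arXiv:1711.10418 — 5 statements merged into one kernel-verified Lean document; each statement's English description precedes it below -/
import Mathlib

section
/- Let (b,θ,0,m) be a magnetic graph over X with potential q = 0, and let W ⊆ X be a finite nonempty set that is connected with respect to b (any two points of W are joined by a path inside W along edges with b > 0). Then ι_{1,θ}(W) = 0 if and only if there exists a nonzero function f : W → ℂ with H_{θ,W} f = 0, where H_{θ,W} f(x) = (1/m(x)) Σ_{y∈W} b(x,y)(f(x) − e^{iθ(x,y)} f(y)) for x ∈ W. -/
open Complex MeasureTheory
open scoped Classical

noncomputable section

variable {X : Type*}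

/-- The structural hypotheses of a magnetic graph `(b, θ, q, m)` over `X`:
`b` is nonnegative, symmetric, has zero diagonal and summable rows; the
magnetic potential `θ` is antisymmetric modulo `2π`; the measure `m` is positive. -/
def IsMagneticGraph (b θ : X → X → ℝ) (m : X → ℝ) : Prop :=
  (∀ x y, 0 ≤ b x y) ∧ (∀ x y, b x y = b y x) ∧ (∀ x, b x x = 0) ∧
  (∀ x, Summable fun y => b x y) ∧
  (∀ x y, ∃ k : ℤ, θ x y + θ y x = 2 * Real.pi * k) ∧
  (∀ x, 0 < m x)

/-- The `p`-frustration index `ι_{p,θ}(W)` of a finite set `W`. -/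
def frust (b θ : X → X → ℝ) (p : ℝ) (W : Finset X) : ℝ :=
  sInf {r : ℝ | ∃ τ : X → ℂ, (∀ x ∈ W, ‖τ x‖ = 1) ∧
    r = (1 / 2) * ∑ x ∈ W, ∑ y ∈ W,
      b x y * ‖τ x - Complex.exp ((θ x y : ℂ) * Complex.I) * τ y‖ ^ p}

/-- The measure `b(∂W)` of the boundary `∂W = (W×(X∖W)) ∪ ((X∖W)×W)`. -/
def bBoundary (b : X → X → ℝ) (W : Finset X) : ℝ :=
  (∑ x ∈ W, ∑' y : {y : X // y ∉ W}, b x ↑y) +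
  (∑ y ∈ W, ∑' x : {x : X // x ∉ W}, b ↑x y)

/-- `(a,k)_p`-magnetic-sparseness. -/
def MagSparse (b θ : X → X → ℝ) (q m : X → ℝ) (p a k : ℝ) : Prop :=
  ∀ W : Finset X,
    (∑ x ∈ W, ∑ y ∈ W, b x y) ≤
      (1 + a) * frust b θ p W +
      a * ((1 / 2) * bBoundary b W + ∑ x ∈ W, max (q x) 0 * m x) +
      k * ∑ x ∈ W, m x

/-- The energy functional `Q_{p,θ}` on finitely supported functions. -/
def Qform (b θ : X → X → ℝ) (q m : X → ℝ) (p : ℝ) (f : X → ℂ) : ℝ :=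
  (1 / 2) * ∑' x, ∑' y, b x y * ‖f x - Complex.exp ((θ x y : ℂ) * Complex.I) * f y‖ ^ p +
  ∑' x, q x * ‖f x‖ ^ p * m x

/-- The weighted vertex degree `Deg(x) = (1/m(x)) Σ_y b(x,y) + q(x)`. -/
def Degf (b : X → X → ℝ) (q m : X → ℝ) (x : X) : ℝ :=
  (1 / m x) * ∑' y, b x y + q x

/-- The pairing `⟨Deg, |f|^p⟩ = Σ_x Deg(x) |f(x)|^p m(x)`. -/
def degPair (b : X → X → ℝ) (q m : X → ℝ) (p : ℝ) (f : X → ℂ) : ℝ :=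
  ∑' x, Degf b q m x * ‖f x‖ ^ p * m x

/-- The `p`-norm to the `p`: `‖f‖_p^p = Σ_x |f(x)|^p m(x)`. -/
def pNorm (m : X → ℝ) (p : ℝ) (f : X → ℂ) : ℝ :=
  ∑' x, ‖f x‖ ^ p * m x

/-- `q ∈ K_α^{p,θ}` with constant `C`: the negative part of `q` is form bounded. -/
def InKClass (b θ : X → X → ℝ) (q m : X → ℝ) (p α C : ℝ) : Prop :=
  ∀ f : X → ℂ, (Function.support f).Finite →
    (∑' x, max (-q x) 0 * ‖f x‖ ^ p * m x) ≤
      α * Qform b θ (fun x => max (q x) 0) m p f + C * pNorm m p f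

/-!
A unimodular `τ` has zero energy exactly when it is parallel, `τ x = e^{iθ(x,y)} τ y` along every
edge of `W`, and by compactness of the torus the infimum defining `ι_{p,θ}(W)` is attained; so
`ι_{p,θ}(W) = 0` iff a unimodular parallel section exists. Such a section lies in the kernel of
`H_{θ,W}`. Conversely, for `f` in the kernel take `x` where `|f|` is maximal on `W`: `H f (x) = 0`
makes `f x` a weighted average of the values `e^{iθ(x,y)} f y`, which lie in the disc of radius
`|f x|`, so all of them equal `f x`. Connectedness spreads maximality over `W`, and `f / |f x|`
is a unimodular parallel section.
-/

theorem Complex.norm_sub_sq_eq (a z : ℂ) :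
    ‖a - z‖ ^ 2 = ‖z‖ ^ 2 - ‖a‖ ^ 2 + 2 * (starRingEnd ℂ a * (a - z)).re := by
  simp only [Complex.sq_norm, Complex.normSq_apply, Complex.mul_re, Complex.sub_re,
    Complex.sub_im, Complex.conj_re, Complex.conj_im]
  ring

theorem Complex.eq_of_sum_mul_sub_eq_zero {ι : Type*} {s : Finset ι} {w : ι → ℝ} {a : ℂ}
    {z : ι → ℂ} (hw : ∀ i ∈ s, 0 ≤ w i) (hz : ∀ i ∈ s, ‖z i‖ ≤ ‖a‖)
    (h : ∑ i ∈ s, (w i : ℂ) * (a - z i) = 0) : ∀ i ∈ s, 0 < w i → z i = a := by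
  have hre : ∑ i ∈ s, w i * (starRingEnd ℂ a * (a - z i)).re = 0 := by
    simpa [Finset.mul_sum, Complex.re_sum, mul_left_comm] using
      congrArg Complex.re (congrArg (starRingEnd ℂ a * ·) h)
  have hsum : ∑ i ∈ s, w i * ‖a - z i‖ ^ 2 = ∑ i ∈ s, w i * (‖z i‖ ^ 2 - ‖a‖ ^ 2) := by
    simp only [Complex.norm_sub_sq_eq, mul_add, Finset.sum_add_distrib, mul_left_comm _ (2 : ℝ),
      ← Finset.mul_sum, hre, mul_zero, add_zero]
  have hnonneg : ∀ i ∈ s, 0 ≤ w i * ‖a - z i‖ ^ 2 := fun i hi => mul_nonneg (hw i hi) (sq_nonneg _)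
  have hle : ∑ i ∈ s, w i * ‖a - z i‖ ^ 2 ≤ 0 :=
    hsum ▸ Finset.sum_nonpos fun i hi =>
      mul_nonpos_of_nonneg_of_nonpos (hw i hi) (by nlinarith [hz i hi, norm_nonneg (z i)])
  have hzero := (Finset.sum_eq_zero_iff_of_nonneg hnonneg).1
    (le_antisymm hle (Finset.sum_nonneg hnonneg))
  intro i hi hwi
  have := (mul_eq_zero.1 (hzero i hi)).resolve_left hwi.ne'
  exact (norm_sub_eq_zero_iff.1 (pow_eq_zero_iff two_ne_zero |>.1 this)).symm

def magEnergy (b θ : X → X → ℝ) (p : ℝ) (W : Finset X) (τ : X → ℂ) : ℝ :=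
  (1 / 2) * ∑ x ∈ W, ∑ y ∈ W, b x y * ‖τ x - Complex.exp ((θ x y : ℂ) * Complex.I) * τ y‖ ^ p

def magLaplacian (b θ : X → X → ℝ) (m : X → ℝ) (W : Finset X) (f : X → ℂ) (x : X) : ℂ :=
  (1 / (m x : ℂ)) * ∑ y ∈ W, (b x y : ℂ) * (f x - Complex.exp ((θ x y : ℂ) * Complex.I) * f y)

/-- `τ` is a parallel section of the connection `θ` along the edges of `W`. -/
def IsParallelOn (b θ : X → X → ℝ) (W : Finset X) (τ : X → ℂ) : Prop :=
  ∀ x ∈ W, ∀ y ∈ W, 0 < b x y → Complex.exp ((θ x y : ℂ) * Complex.I) * τ y = τ x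

section Frustration

variable {b θ : X → X → ℝ} {p : ℝ} {W : Finset X}

theorem magEnergy_nonneg (hb : ∀ x y, 0 ≤ b x y) (τ : X → ℂ) : 0 ≤ magEnergy b θ p W τ :=
  mul_nonneg (by norm_num) <| Finset.sum_nonneg fun x _ => Finset.sum_nonneg fun y _ =>
    mul_nonneg (hb x y) (Real.rpow_nonneg (norm_nonneg _) p)

theorem magEnergy_eq_zero_iff (hb : ∀ x y, 0 ≤ b x y) (hp : 0 < p) (τ : X → ℂ) :
    magEnergy b θ p W τ = 0 ↔ IsParallelOn b θ W τ := by
  have hterm : ∀ x y, 0 ≤ b x y * ‖τ x - Complex.exp ((θ x y : ℂ) * Complex.I) * τ y‖ ^ p :=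
    fun x y => mul_nonneg (hb x y) (Real.rpow_nonneg (norm_nonneg _) p)
  simp only [magEnergy, IsParallelOn, mul_eq_zero, one_div, inv_eq_zero, OfNat.ofNat_ne_zero,
    false_or, Finset.sum_eq_zero_iff_of_nonneg fun x _ => Finset.sum_nonneg fun y _ => hterm x y,
    Finset.sum_eq_zero_iff_of_nonneg fun y _ => hterm _ y,
    Real.rpow_eq_zero (norm_nonneg _) hp.ne', norm_eq_zero, sub_eq_zero]
  refine forall₂_congr fun x _ => forall₂_congr fun y _ => ?_
  rw [(hb x y).lt_iff_ne', or_iff_not_imp_left, eq_comm (a := τ x)]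

theorem frust_le_magEnergy (hb : ∀ x y, 0 ≤ b x y) {τ : X → ℂ} (hτ : ∀ x ∈ W, ‖τ x‖ = 1) :
    frust b θ p W ≤ magEnergy b θ p W τ :=
  csInf_le ⟨0, by rintro _ ⟨τ', -, rfl⟩; exact magEnergy_nonneg hb τ'⟩ ⟨τ, hτ, rfl⟩

theorem frust_nonneg (hb : ∀ x y, 0 ≤ b x y) : 0 ≤ frust b θ p W :=
  Real.sInf_nonneg <| by rintro _ ⟨τ, -, rfl⟩; exact magEnergy_nonneg hb τ

theorem continuous_magEnergy (hp : 0 ≤ p) : Continuous (magEnergy b θ p W) := by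
  unfold magEnergy
  fun_prop (disch := assumption)

/-- Minimise over the compact torus of everywhere unimodular `τ`; modifying `τ` off `W` does not
change its energy, so this minimum is the infimum defining `frust`. -/
theorem exists_frust_eq_magEnergy (hp : 0 ≤ p) :
    ∃ τ : X → ℂ, (∀ x ∈ W, ‖τ x‖ = 1) ∧ frust b θ p W = magEnergy b θ p W τ := by
  obtain ⟨τ₀, hτ₀, hmin⟩ :=
    (isCompact_univ_pi fun _ => isCompact_sphere (0 : ℂ) 1).exists_isMinOn
      ⟨fun _ => 1, fun _ _ => by simp⟩ (continuous_magEnergy hp).continuousOn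
  have hτ₀W : ∀ x ∈ W, ‖τ₀ x‖ = 1 := fun x _ => by simpa using hτ₀ x (Set.mem_univ x)
  refine ⟨τ₀, hτ₀W, IsLeast.csInf_eq ⟨⟨τ₀, hτ₀W, rfl⟩, ?_⟩⟩
  rintro _ ⟨τ, hτ, rfl⟩
  have hpiece : W.piecewise τ 1 ∈ Set.univ.pi fun _ => Metric.sphere (0 : ℂ) 1 := by
    intro x _
    by_cases hx : x ∈ W <;> simp [hx, hτ]
  calc magEnergy b θ p W τ₀ ≤ magEnergy b θ p W (W.piecewise τ 1) := hmin hpiece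
    _ = magEnergy b θ p W τ := by
      unfold magEnergy
      refine congrArg _ (Finset.sum_congr rfl fun x hx => Finset.sum_congr rfl fun y hy => ?_)
      rw [Finset.piecewise_eq_of_mem _ _ _ hx, Finset.piecewise_eq_of_mem _ _ _ hy]

theorem frust_eq_zero_iff_exists_isParallelOn (hb : ∀ x y, 0 ≤ b x y) (hp : 0 < p) :
    frust b θ p W = 0 ↔ ∃ τ : X → ℂ, (∀ x ∈ W, ‖τ x‖ = 1) ∧ IsParallelOn b θ W τ := by
  constructor
  · intro h0
    obtain ⟨τ, hτ, hfrust⟩ := exists_frust_eq_magEnergy hp.le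
    exact ⟨τ, hτ, (magEnergy_eq_zero_iff hb hp τ).1 (hfrust ▸ h0)⟩
  · rintro ⟨τ, hτ, hpar⟩
    refine le_antisymm ?_ (frust_nonneg hb)
    exact (frust_le_magEnergy hb hτ).trans ((magEnergy_eq_zero_iff hb hp τ).2 hpar).le

end Frustration

section Kernel

variable {b θ : X → X → ℝ} {m : X → ℝ} {W : Finset X} {f : X → ℂ}

theorem IsParallelOn.magLaplacian_eq_zero (hb : ∀ x y, 0 ≤ b x y) (hf : IsParallelOn b θ W f)
    {x : X} (hx : x ∈ W) : magLaplacian b θ m W f x = 0 := by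
  unfold magLaplacian
  rw [Finset.sum_eq_zero fun y hy => ?_, mul_zero]
  rcases (hb x y).lt_or_eq with hxy | hxy
  · rw [hf x hx y hy hxy, sub_self, mul_zero]
  · rw [← hxy, Complex.ofReal_zero, zero_mul]

theorem exp_mul_eq_of_magLaplacian_eq_zero (hb : ∀ x y, 0 ≤ b x y) {x : X} (hm : m x ≠ 0)
    (hmax : ∀ y ∈ W, ‖f y‖ ≤ ‖f x‖) (hf : magLaplacian b θ m W f x = 0) :
    ∀ y ∈ W, 0 < b x y → Complex.exp ((θ x y : ℂ) * Complex.I) * f y = f x :=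
  Complex.eq_of_sum_mul_sub_eq_zero (fun y _ => hb x y)
    (fun y hy => by simpa [Complex.norm_exp_ofReal_mul_I] using hmax y hy)
    ((mul_eq_zero.1 hf).resolve_left (by simpa using hm))

theorem norm_eq_of_magLaplacian_eq_zero (hb : ∀ x y, 0 ≤ b x y) (hm : ∀ x ∈ W, m x ≠ 0)
    (hconn : ∀ x ∈ W, ∀ y ∈ W,
      Relation.ReflTransGen (fun u v => u ∈ W ∧ v ∈ W ∧ 0 < b u v) x y)
    (hf : ∀ x ∈ W, magLaplacian b θ m W f x = 0) {x₀ : X} (hx₀ : x₀ ∈ W)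
    (hmax : ∀ y ∈ W, ‖f y‖ ≤ ‖f x₀‖) : ∀ x ∈ W, ‖f x‖ = ‖f x₀‖ := by
  intro x hx
  induction hconn x₀ hx₀ x hx with
  | refl => rfl
  | tail _ hedge ih =>
    obtain ⟨hu, hv, huv⟩ := hedge
    rw [← ih hu,
      ← exp_mul_eq_of_magLaplacian_eq_zero hb (hm _ hu) (ih hu ▸ hmax) (hf _ hu) _ hv huv, norm_mul,
      Complex.norm_exp_ofReal_mul_I, one_mul]

theorem exists_isParallelOn_of_magLaplacian_eq_zero (hb : ∀ x y, 0 ≤ b x y)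
    (hm : ∀ x ∈ W, m x ≠ 0)
    (hconn : ∀ x ∈ W, ∀ y ∈ W,
      Relation.ReflTransGen (fun u v => u ∈ W ∧ v ∈ W ∧ 0 < b u v) x y)
    (hf : ∀ x ∈ W, magLaplacian b θ m W f x = 0) (hne : ∃ x ∈ W, f x ≠ 0) :
    ∃ τ : X → ℂ, (∀ x ∈ W, ‖τ x‖ = 1) ∧ IsParallelOn b θ W τ := by
  obtain ⟨x₁, hx₁, hfx₁⟩ := hne
  obtain ⟨x₀, hx₀, hmax⟩ := W.exists_max_image (‖f ·‖) ⟨x₁, hx₁⟩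
  have hM : ‖f x₀‖ ≠ 0 := ((norm_pos_iff.2 hfx₁).trans_le (hmax x₁ hx₁)).ne'
  have hnorm := norm_eq_of_magLaplacian_eq_zero hb hm hconn hf hx₀ hmax
  refine ⟨fun x => f x / ‖f x₀‖, fun x hx => by simp [hnorm x hx, hM], ?_⟩
  intro x hx y hy hxy
  rw [← mul_div_assoc, exp_mul_eq_of_magLaplacian_eq_zero hb (hm x hx)
    (fun y hy => (hnorm x hx).symm ▸ hmax y hy) (hf x hx) y hy hxy]

theorem exists_isParallelOn_iff_exists_magLaplacian_eq_zero (hb : ∀ x y, 0 ≤ b x y)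
    (hm : ∀ x ∈ W, m x ≠ 0) (hW : W.Nonempty)
    (hconn : ∀ x ∈ W, ∀ y ∈ W,
      Relation.ReflTransGen (fun u v => u ∈ W ∧ v ∈ W ∧ 0 < b u v) x y) :
    (∃ τ : X → ℂ, (∀ x ∈ W, ‖τ x‖ = 1) ∧ IsParallelOn b θ W τ) ↔
      ∃ f : X → ℂ, (∃ x ∈ W, f x ≠ 0) ∧ ∀ x ∈ W, magLaplacian b θ m W f x = 0 := by
  constructor
  · rintro ⟨τ, hτ, hpar⟩
    obtain ⟨x, hx⟩ := hW
    exact ⟨τ, ⟨x, hx, norm_ne_zero_iff.1 (by simp [hτ x hx])⟩,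
      fun x hx => hpar.magLaplacian_eq_zero hb hx⟩
  · rintro ⟨f, hne, hf⟩
    exact exists_isParallelOn_of_magLaplacian_eq_zero hb hm hconn hf hne

end Kernel

theorem frust_one_eq_zero_iff_ker_nontrivial_general
    (b θ : X → X → ℝ) (m : X → ℝ) (hG : IsMagneticGraph b θ m)
    (W : Finset X) (hW : W.Nonempty)
    (hconn : ∀ x ∈ W, ∀ y ∈ W,
      Relation.ReflTransGen (fun u v => u ∈ W ∧ v ∈ W ∧ 0 < b u v) x y) :
    frust b θ 1 W = 0 ↔
      ∃ f : X → ℂ, (∃ x ∈ W, f x ≠ 0) ∧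
        ∀ x ∈ W, (1 / (m x : ℂ)) *
          ∑ y ∈ W, (b x y : ℂ) * (f x - Complex.exp ((θ x y : ℂ) * Complex.I) * f y) = 0 := by
  obtain ⟨hb, -, -, -, -, hm⟩ := hG
  rw [frust_eq_zero_iff_exists_isParallelOn hb one_pos]
  exact exists_isParallelOn_iff_exists_magLaplacian_eq_zero hb (fun x _ => (hm x).ne') hW hconn

/-- for `q = 0` and a finite nonempty connected `W`, `ι_{1,θ}(W) = 0` iff the
magnetic Laplacian `H_{θ,W}` has nontrivial kernel. -/
theorem frust_one_eq_zero_iff_ker_nontrivial [Countable X]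
    (b θ : X → X → ℝ) (m : X → ℝ) (hG : IsMagneticGraph b θ m)
    (W : Finset X) (hW : W.Nonempty)
    (hconn : ∀ x ∈ W, ∀ y ∈ W,
      Relation.ReflTransGen (fun u v => u ∈ W ∧ v ∈ W ∧ 0 < b u v) x y) :
    frust b θ 1 W = 0 ↔
      ∃ f : X → ℂ, (∃ x ∈ W, f x ≠ 0) ∧
        ∀ x ∈ W, (1 / (m x : ℂ)) *
          ∑ y ∈ W, (b x y : ℂ) * (f x - Complex.exp ((θ x y : ℂ) * Complex.I) * f y) = 0 :=
  frust_one_eq_zero_iff_ker_nontrivial_general b θ m hG W hW hconn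
end
end

section
/- For all complex numbers v, w with |v| = |w| = 1 and all real numbers β, p ∈ [1,∞), one has |v − w| + β^p − 1 ≤ √(p²+1) · |v − βw| · ((1 + β^p)/2)^{(p−1)/p}. -/
open Complex MeasureTheory
open scoped Classical

noncomputable section

variable {X : Type*}

/-! The norm `‖v - βw‖` splits as `(β - 1)² + β‖v - w‖²`, so by Cauchy–Schwarz
`‖v - w‖ + p(β - 1) ≤ √(p² + 1) ‖v - βw‖`. The theorem then reduces to the one-variable
inequality `β^p - 1 ≤ p(β - 1) M^{(p-1)/p}` with `M = (1 + β^p)/2`, which holds with equality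
at `β = 1`; the derivative of the difference is nonnegative by weighted AM-GM together with
the tangent-line bound `x^p - 1 ≤ p(x - 1)x^{p-1}` of the convex function `x^p`. -/

theorem norm_sub_smul_sq_of_norm_eq_one {E : Type*} [NormedAddCommGroup E]
    [InnerProductSpace ℝ E] {v w : E} (hv : ‖v‖ = 1) (hw : ‖w‖ = 1) (β : ℝ) :
    ‖v - β • w‖ ^ 2 = (β - 1) ^ 2 + β * ‖v - w‖ ^ 2 := by
  rw [norm_sub_sq_real, norm_sub_sq_real, real_inner_smul_right, norm_smul, hv, hw,
    Real.norm_eq_abs, mul_pow, sq_abs]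
  ring

theorem mul_add_mul_le_sqrt_mul_sqrt (a b x y : ℝ) :
    a * x + b * y ≤ √(a ^ 2 + b ^ 2) * √(x ^ 2 + y ^ 2) := by
  rw [← Real.sqrt_mul (by positivity)]
  exact (le_abs_self _).trans
    (Real.abs_le_sqrt (by nlinarith [sq_nonneg (a * y - b * x)]))

namespace Real

variable {p x : ℝ}

theorem mul_rpow_sub_one_mul_rpow_inv_le (hp : 1 ≤ p) (hx : 0 ≤ x) {M : ℝ} (hM : 0 ≤ M) :
    p * (x ^ (p - 1) * M ^ (1 / p)) ≤ (p - 1) * x ^ p + M := by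
  have hp0 : 0 < p := by linarith
  have h := geom_mean_le_arith_mean2_weighted (w₁ := (p - 1) / p) (w₂ := 1 / p)
    (p₁ := x ^ p) (p₂ := M) (div_nonneg (by linarith) hp0.le) (by positivity)
    (rpow_nonneg hx p) hM (by field_simp; ring)
  rw [← rpow_mul hx, show p * ((p - 1) / p) = p - 1 by field_simp] at h
  calc p * (x ^ (p - 1) * M ^ (1 / p))
      ≤ p * ((p - 1) / p * x ^ p + 1 / p * M) := mul_le_mul_of_nonneg_left h hp0.le
    _ = (p - 1) * x ^ p + M := by field_simp

theorem rpow_sub_one_le_mul_sub_one_mul_rpow (hp : 1 ≤ p) (hx : 0 < x) :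
    x ^ p - 1 ≤ p * (x - 1) * x ^ (p - 1) := by
  have h := mul_rpow_sub_one_mul_rpow_inv_le hp hx.le zero_le_one
  rw [one_rpow, mul_one] at h
  have hxp : x ^ p = x * x ^ (p - 1) := by
    rw [← rpow_one_add' hx.le (by linarith)]
    ring_nf
  rw [hxp] at h ⊢
  linarith

theorem hasDerivAt_sub_one_mul_mean_rpow (hx : 0 < x) :
    HasDerivAt (fun x => p * (x - 1) * ((1 + x ^ p) / 2) ^ ((p - 1) / p) - x ^ p)
      (p * ((1 + x ^ p) / 2) ^ ((p - 1) / p) +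
        p * (x - 1) * ((p - 1) / p * ((1 + x ^ p) / 2) ^ ((p - 1) / p - 1) *
          (p * x ^ (p - 1) / 2)) - p * x ^ (p - 1)) x := by
  have hpow : HasDerivAt (fun x => x ^ p) (p * x ^ (p - 1)) x :=
    hasDerivAt_rpow_const (Or.inl hx.ne')
  have hmean := (hpow.const_add 1).div_const 2
  have hmean_pow := (hasDerivAt_rpow_const (p := (p - 1) / p)
    (Or.inl (by positivity : (1 + x ^ p) / 2 ≠ 0))).comp x hmean
  have hlin : HasDerivAt (fun x => p * (x - 1)) p x := by
    simpa using ((hasDerivAt_id x).sub_const 1).const_mul p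
  exact (hlin.mul hmean_pow).sub hpow

theorem sub_one_mul_mean_rpow_deriv_nonneg (hp : 1 ≤ p) (hx : 0 < x) :
    0 ≤ p * ((1 + x ^ p) / 2) ^ ((p - 1) / p) +
        p * (x - 1) * ((p - 1) / p * ((1 + x ^ p) / 2) ^ ((p - 1) / p - 1) *
          (p * x ^ (p - 1) / 2)) - p * x ^ (p - 1) := by
  set M := (1 + x ^ p) / 2 with hM_def
  have hM : 0 < M := by positivity
  -- multiplying by `M^{1/p}` turns the powers of `M` into `M` and `1`
  rw [← mul_nonneg_iff_of_pos_right (rpow_pos_of_pos hM (1 / p))]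
  have hM_mul : M ^ ((p - 1) / p) * M ^ (1 / p) = M := by
    rw [← rpow_add hM, show (p - 1) / p + 1 / p = 1 by field_simp; ring, rpow_one]
  have hM_mul' : M ^ ((p - 1) / p - 1) * M ^ (1 / p) = 1 := by
    rw [← rpow_add hM, show (p - 1) / p - 1 + 1 / p = 0 by field_simp; ring, rpow_zero]
  have hyoung := mul_rpow_sub_one_mul_rpow_inv_le hp hx.le hM.le
  have htangent := rpow_sub_one_le_mul_sub_one_mul_rpow hp hx
  have hp_sub : 0 ≤ p - 1 := by linarith
  calc (0 : ℝ) ≤ p * M + (p - 1) * (x - 1) * (p * x ^ (p - 1) / 2)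
        - p * (x ^ (p - 1) * M ^ (1 / p)) := by
        nlinarith [mul_le_mul_of_nonneg_left htangent hp_sub]
    _ = p * (M ^ ((p - 1) / p) * M ^ (1 / p)) + (p - 1) * (x - 1) * (p * x ^ (p - 1) / 2) *
          (M ^ ((p - 1) / p - 1) * M ^ (1 / p)) - p * (x ^ (p - 1) * M ^ (1 / p)) := by
        rw [hM_mul, hM_mul', mul_one]
    _ = _ := by field_simp

theorem rpow_sub_one_le_mul_sub_one_mul_mean_rpow (hp : 1 ≤ p) (hx : 1 ≤ x) :
    x ^ p - 1 ≤ p * (x - 1) * ((1 + x ^ p) / 2) ^ ((p - 1) / p) := by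
  have hmono : MonotoneOn
      (fun x => p * (x - 1) * ((1 + x ^ p) / 2) ^ ((p - 1) / p) - x ^ p) (Set.Ici 1) := by
    refine monotoneOn_of_deriv_nonneg (convex_Ici 1)
      (fun y hy => (hasDerivAt_sub_one_mul_mean_rpow
        (zero_lt_one.trans_le hy)).continuousAt.continuousWithinAt)
      (fun y hy => ?_) (fun y hy => ?_) <;> rw [interior_Ici] at hy
    · exact (hasDerivAt_sub_one_mul_mean_rpow (zero_lt_one.trans hy)).differentiableAt
        |>.differentiableWithinAt
    · rw [(hasDerivAt_sub_one_mul_mean_rpow (zero_lt_one.trans hy)).deriv]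
      exact sub_one_mul_mean_rpow_deriv_nonneg hp (zero_lt_one.trans hy)
  have h := hmono Set.self_mem_Ici hx hx
  simp only [sub_self, mul_zero, zero_mul, one_rpow, zero_sub] at h
  linarith

end Real

/-- the elementary inequality
`|v − w| + β^p − 1 ≤ √(p²+1)·|v − βw|·((1+β^p)/2)^{(p−1)/p}` for unit vectors `v, w ∈ ℂ`
and `β, p ∈ [1,∞)`. -/
theorem unit_vectors_beta_rpow (v w : ℂ) (hv : ‖v‖ = 1) (hw : ‖w‖ = 1)
    (β p : ℝ) (hβ : 1 ≤ β) (hp : 1 ≤ p) :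
    ‖v - w‖ + β ^ p - 1 ≤
      Real.sqrt (p ^ 2 + 1) * ‖v - (β : ℂ) * w‖ * ((1 + β ^ p) / 2) ^ ((p - 1) / p) := by
  set c := ((1 + β ^ p) / 2) ^ ((p - 1) / p)
  have hc : 1 ≤ c := Real.one_le_rpow
    (by linarith [Real.one_le_rpow hβ (by linarith : 0 ≤ p)]) (by positivity)
  have hsplit : ‖v - (β : ℂ) * w‖ ^ 2 = (β - 1) ^ 2 + β * ‖v - w‖ ^ 2 := by
    rw [← Complex.real_smul]
    exact norm_sub_smul_sq_of_norm_eq_one hv hw β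
  have hcs : ‖v - w‖ + p * (β - 1) ≤ √(p ^ 2 + 1) * ‖v - (β : ℂ) * w‖ := by
    calc ‖v - w‖ + p * (β - 1) = 1 * ‖v - w‖ + p * (β - 1) := by ring
      _ ≤ √(1 ^ 2 + p ^ 2) * √(‖v - w‖ ^ 2 + (β - 1) ^ 2) := mul_add_mul_le_sqrt_mul_sqrt ..
      _ ≤ √(p ^ 2 + 1) * ‖v - (β : ℂ) * w‖ := by
        rw [add_comm (1 ^ 2), one_pow, ← Real.sqrt_sq (norm_nonneg (v - (β : ℂ) * w)), hsplit]
        gcongr √(p ^ 2 + 1) * √?_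
        nlinarith [sq_nonneg ‖v - w‖]
  calc ‖v - w‖ + β ^ p - 1 ≤ c * (‖v - w‖ + p * (β - 1)) := by
        nlinarith [Real.rpow_sub_one_le_mul_sub_one_mul_mean_rpow hp hβ, norm_nonneg (v - w)]
    _ ≤ c * (√(p ^ 2 + 1) * ‖v - (β : ℂ) * w‖) := by gcongr
    _ = √(p ^ 2 + 1) * ‖v - (β : ℂ) * w‖ * c := by ring
end
end

section
/- Let (b,θ,q,m) be a magnetic graph over X with q ≥ 0 and p ∈ [1,∞). Suppose there exist ã ∈ (0,1) and k̃ ≥ 0 such that (1 − ã)⟨Deg,|f|^p⟩ − k̃ ‖f‖_p^p ≤ Q_{p,θ}(f) for all finitely supported f : X → ℂ. Then the graph is (a,k)_p-magnetic-sparse with a = ã/(1−ã) and k = k̃/(1−ã). -/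
/-! Test the lower bound on `f = τ 1_W` with `τ` unimodular on `W`. Then `‖f‖_p^p = m(W)`,
`⟨Deg, |f|^p⟩ = b(W × W) + b(W, X ∖ W) + q m(W)`, and, since `f` vanishes at exactly one end of
every boundary edge, `Q_{p,θ}(f) = E(τ) + b(W, X ∖ W) + q m(W)`, where `E(τ)` is the energy whose
minimum over `τ` is `ι_{p,θ}(W)`. Rearranging gives
`(1 - ã) b(W × W) ≤ E(τ) + ã (b(∂W)/2 + q m(W)) + k̃ m(W)`; minimise over `τ` and divide by
`1 - ã`. -/

open Complex MeasureTheory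
open scoped Classical

noncomputable section

variable {X : Type*}

/-- `b(W, X ∖ W)`. -/
def bOut (b : X → X → ℝ) (W : Finset X) : ℝ :=
  ∑ x ∈ W, ∑' y : {y : X // y ∉ W}, b x y

variable {b θ : X → X → ℝ} {q m : X → ℝ} {p : ℝ} {W : Finset X} {f : X → ℂ} {x : X}

theorem bBoundary_eq_two_mul_bOut (hbs : ∀ x y, b x y = b y x) (W : Finset X) :
    bBoundary b W = 2 * bOut b W := by
  rw [bBoundary, bOut, two_mul]
  congr 1
  exact Finset.sum_congr rfl fun y _ => tsum_congr fun x => hbs _ _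

theorem le_frust {c : ℝ} (h : ∀ τ : X → ℂ, (∀ x ∈ W, ‖τ x‖ = 1) →
      c ≤ (1 / 2) * ∑ x ∈ W, ∑ y ∈ W, b x y * ‖τ x - exp (θ x y * I) * τ y‖ ^ p) :
    c ≤ frust b θ p W :=
  le_csInf ⟨_, fun _ => 1, fun _ _ => norm_one, rfl⟩ (by rintro r ⟨τ, hτ, rfl⟩; exact h τ hτ)

theorem summable_twisted_row (hb0 : ∀ y, 0 ≤ b x y) (hbsum : Summable (b x)) (hp : 0 ≤ p)
    (hf : ∀ z, ‖f z‖ ≤ 1) :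
    Summable fun y => b x y * ‖f x - exp (θ x y * I) * f y‖ ^ p := by
  refine (hbsum.mul_right (2 ^ p)).of_nonneg_of_le
    (fun y => mul_nonneg (hb0 y) (by positivity)) fun y => ?_
  have hdiff : ‖f x - exp (θ x y * I) * f y‖ ≤ 2 :=
    calc ‖f x - exp (θ x y * I) * f y‖ ≤ ‖f x‖ + ‖exp (θ x y * I) * f y‖ := norm_sub_le _ _
      _ ≤ 2 := by rw [norm_mul, norm_exp_ofReal_mul_I, one_mul]; linarith [hf x, hf y]
  gcongr
  exact hb0 y

/-- `f = τ 1_W` for some `τ : W → 𝕋`. -/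
structure IsUnimodularIndicator (f : X → ℂ) (W : Finset X) : Prop where
  norm_eq_one : ∀ x ∈ W, ‖f x‖ = 1
  eq_zero : ∀ x ∉ W, f x = 0

theorem isUnimodularIndicator_indicator {τ : X → ℂ} (hτ : ∀ x ∈ W, ‖τ x‖ = 1) :
    IsUnimodularIndicator ((W : Set X).indicator τ) W where
  norm_eq_one x hx := by rw [Set.indicator_of_mem (Finset.mem_coe.2 hx), hτ x hx]
  eq_zero x hx := Set.indicator_of_notMem (by simpa using hx) τ

namespace IsUnimodularIndicator

variable (hf : IsUnimodularIndicator f W)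
include hf

theorem finite_support : (Function.support f).Finite :=
  W.finite_toSet.subset fun x hx => by_contra fun hxW => hx (hf.eq_zero x hxW)

theorem norm_le_one (x : X) : ‖f x‖ ≤ 1 := by
  by_cases hx : x ∈ W
  · exact (hf.norm_eq_one x hx).le
  · simp [hf.eq_zero x hx]

theorem norm_rpow (hp : p ≠ 0) (x : X) : ‖f x‖ ^ p = if x ∈ W then 1 else 0 := by
  by_cases hx : x ∈ W
  · simp [hx, hf.norm_eq_one x hx]
  · simp [hx, hf.eq_zero x hx, Real.zero_rpow hp]

theorem tsum_mul_norm_rpow_mul (hp : p ≠ 0) (c w : X → ℝ) :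
    ∑' x, c x * ‖f x‖ ^ p * w x = ∑ x ∈ W, c x * w x := by
  rw [tsum_eq_sum (s := W) fun x hx => by simp [hf.norm_rpow hp, hx]]
  exact Finset.sum_congr rfl fun x hx => by simp [hf.norm_rpow hp, hx]

theorem pNorm_eq (hp : p ≠ 0) : pNorm m p f = ∑ x ∈ W, m x := by
  simpa [pNorm] using hf.tsum_mul_norm_rpow_mul hp 1 m

theorem degPair_eq (hbsum : ∀ x, Summable (b x)) (hm : ∀ x, m x ≠ 0) (hp : p ≠ 0) :
    degPair b q m p f = ∑ x ∈ W, ∑ y ∈ W, b x y + bOut b W + ∑ x ∈ W, q x * m x := by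
  rw [degPair, hf.tsum_mul_norm_rpow_mul hp, bOut, ← Finset.sum_add_distrib,
    ← Finset.sum_add_distrib]
  refine Finset.sum_congr rfl fun x _ => ?_
  rw [Degf, ← (hbsum x).sum_add_tsum_subtype_compl W]
  field_simp [hm x]

theorem tsum_twisted_row_of_mem (hb0 : ∀ y, 0 ≤ b x y) (hbsum : Summable (b x)) (hp : 0 < p)
    (hx : x ∈ W) :
    ∑' y, b x y * ‖f x - exp (θ x y * I) * f y‖ ^ p =
      ∑ y ∈ W, b x y * ‖f x - exp (θ x y * I) * f y‖ ^ p + ∑' y : {y : X // y ∉ W}, b x y := by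
  rw [← (summable_twisted_row hb0 hbsum hp.le hf.norm_le_one).sum_add_tsum_subtype_compl W]
  congr 1
  exact tsum_congr fun y => by simp [hf.eq_zero y y.2, hf.norm_eq_one x hx]

theorem tsum_twisted_row_of_notMem (hp : p ≠ 0) (hx : x ∉ W) :
    ∑' y, b x y * ‖f x - exp (θ x y * I) * f y‖ ^ p = ∑ y ∈ W, b x y := by
  rw [tsum_eq_sum (s := W) fun y hy => by simp [hf.eq_zero x hx, hf.eq_zero y hy, Real.zero_rpow hp]]
  exact Finset.sum_congr rfl fun y hy => by simp [hf.eq_zero x hx, hf.norm_eq_one y hy]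

theorem tsum_tsum_twisted (hb0 : ∀ x y, 0 ≤ b x y) (hbs : ∀ x y, b x y = b y x)
    (hbsum : ∀ x, Summable (b x)) (hp : 0 < p) :
    ∑' x, ∑' y, b x y * ‖f x - exp (θ x y * I) * f y‖ ^ p =
      ∑ x ∈ W, ∑ y ∈ W, b x y * ‖f x - exp (θ x y * I) * f y‖ ^ p + 2 * bOut b W := by
  have hout (x : {x : X // x ∉ W}) :
      ∑' y, b x y * ‖f x - exp (θ x y * I) * f y‖ ^ p = ∑ y ∈ W, b y x :=
    (hf.tsum_twisted_row_of_notMem hp.ne' x.2).trans (Finset.sum_congr rfl fun y _ => hbs _ _)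
  have hsum_out (y : X) : Summable fun x : {x : X // x ∉ W} => b y x := (hbsum y).subtype _
  have hsum : Summable fun x => ∑' y, b x y * ‖f x - exp (θ x y * I) * f y‖ ^ p :=
    W.summable_compl_iff.mp ((summable_sum fun y _ => hsum_out y).congr fun x => (hout x).symm)
  rw [← hsum.sum_add_tsum_subtype_compl W, tsum_congr hout,
    Summable.tsum_finsetSum fun y _ => hsum_out y,
    Finset.sum_congr rfl fun x hx => hf.tsum_twisted_row_of_mem (hb0 x) (hbsum x) hp hx,
    Finset.sum_add_distrib, bOut]
  ring

theorem Qform_eq (hb0 : ∀ x y, 0 ≤ b x y) (hbs : ∀ x y, b x y = b y x)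
    (hbsum : ∀ x, Summable (b x)) (hp : 0 < p) :
    Qform b θ q m p f = (1 / 2) * ∑ x ∈ W, ∑ y ∈ W, b x y * ‖f x - exp (θ x y * I) * f y‖ ^ p +
      bOut b W + ∑ x ∈ W, q x * m x := by
  rw [Qform, hf.tsum_tsum_twisted hb0 hbs hbsum hp, hf.tsum_mul_norm_rpow_mul hp.ne']
  ring

end IsUnimodularIndicator

theorem mul_sum_le_frust_add_of_lower_bound (hG : IsMagneticGraph b θ m) (hp : 0 < p) {ta tk : ℝ}
    (hineq : ∀ f : X → ℂ, (Function.support f).Finite →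
      (1 - ta) * degPair b q m p f - tk * pNorm m p f ≤ Qform b θ q m p f) (W : Finset X) :
    (1 - ta) * ∑ x ∈ W, ∑ y ∈ W, b x y ≤
      frust b θ p W + ta * (bOut b W + ∑ x ∈ W, q x * m x) + tk * ∑ x ∈ W, m x := by
  obtain ⟨hb0, hbs, -, hbsum, -, hm⟩ := hG
  suffices (1 - ta) * ∑ x ∈ W, ∑ y ∈ W, b x y - ta * (bOut b W + ∑ x ∈ W, q x * m x) -
      tk * ∑ x ∈ W, m x ≤ frust b θ p W by linarith
  refine le_frust fun τ hτ => ?_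
  have hf := isUnimodularIndicator_indicator hτ
  have hbound := hineq _ hf.finite_support
  rw [hf.degPair_eq hbsum (fun x => (hm x).ne') hp.ne', hf.pNorm_eq hp.ne',
    hf.Qform_eq hb0 hbs hbsum hp] at hbound
  have henergy : ∑ x ∈ W, ∑ y ∈ W,
      b x y * ‖(W : Set X).indicator τ x - exp (θ x y * I) * (W : Set X).indicator τ y‖ ^ p =
      ∑ x ∈ W, ∑ y ∈ W, b x y * ‖τ x - exp (θ x y * I) * τ y‖ ^ p :=
    Finset.sum_congr rfl fun x hx => Finset.sum_congr rfl fun y hy => by simp [hx, hy]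
  linarith

theorem lower_bound_implies_sparse_general
    (b θ : X → X → ℝ) (q m : X → ℝ) (hG : IsMagneticGraph b θ m)
    (hq : ∀ x, 0 ≤ q x)
    (p : ℝ) (hp : 1 ≤ p)
    (ta tk : ℝ) (hta1 : ta < 1)
    (hineq : ∀ f : X → ℂ, (Function.support f).Finite →
      (1 - ta) * degPair b q m p f - tk * pNorm m p f ≤ Qform b θ q m p f) :
    MagSparse b θ q m p (ta / (1 - ta)) (tk / (1 - ta)) := by
  have h1ta : 0 < 1 - ta := by linarith
  have hbs : ∀ x y, b x y = b y x := hG.2.1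
  intro W
  have hq' : ∑ x ∈ W, max (q x) 0 * m x = ∑ x ∈ W, q x * m x :=
    Finset.sum_congr rfl fun x _ => by rw [max_eq_left (hq x)]
  rw [bBoundary_eq_two_mul_bOut hbs, hq']
  calc ∑ x ∈ W, ∑ y ∈ W, b x y
      = (1 - ta) * (∑ x ∈ W, ∑ y ∈ W, b x y) / (1 - ta) := by field_simp
    _ ≤ (frust b θ p W + ta * (bOut b W + ∑ x ∈ W, q x * m x) + tk * ∑ x ∈ W, m x) / (1 - ta) := by
      gcongr
      exact mul_sum_le_frust_add_of_lower_bound hG (by linarith) hineq W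
    _ = _ := by field_simp; ring

/-- if `q ≥ 0` and the form lower bound
`(1 − ã)⟨Deg,|f|^p⟩ − k̃‖f‖_p^p ≤ Q_{p,θ}(f)` holds for all finitely supported `f`,
then the graph is `(ã/(1−ã), k̃/(1−ã))_p`-magnetic-sparse. -/
theorem lower_bound_implies_sparse [Countable X]
    (b θ : X → X → ℝ) (q m : X → ℝ) (hG : IsMagneticGraph b θ m)
    (hq : ∀ x, 0 ≤ q x)
    (p : ℝ) (hp : 1 ≤ p)
    (ta tk : ℝ) (hta0 : 0 < ta) (hta1 : ta < 1) (htk : 0 ≤ tk)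
    (hineq : ∀ f : X → ℂ, (Function.support f).Finite →
      (1 - ta) * degPair b q m p f - tk * pNorm m p f ≤ Qform b θ q m p f) :
    MagSparse b θ q m p (ta / (1 - ta)) (tk / (1 - ta)) :=
  lower_bound_implies_sparse_general b θ q m hG hq p hp ta tk hta1 hineq
end
end

section
/- Let (b₁,θ₁,q₁,m₁) and (b₂,θ₂,q₂,m₂) be magnetic graphs over X₁ and X₂, let μ : X₁×X₂ → (0,∞), and let (b,θ,q,m_μ) be their product over X₁×X₂. Then for every finitely supported f : X₁×X₂ → ℂ, Q_{2,θ}(f) = Σ_{x₂∈X₂} Q_{2,θ₁}(f(·,x₂)) m₂(x₂) + Σ_{x₁∈X₁} Q_{2,θ₂}(f(x₁,·)) m₁(x₁), where Q_{2,θ₁} and Q_{2,θ₂} are the forms of the two factor graphs. -/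
open Complex MeasureTheory
open scoped Classical

noncomputable section

variable {X : Type*}

section Products

variable {X₁ X₂ : Type*}

/-- The edge weight of the product of two magnetic graphs:
`b(x,y) = b₁(x₁,y₁)m₂(x₂)·1_{x₂=y₂} + b₂(x₂,y₂)m₁(x₁)·1_{x₁=y₁}`. -/
def prodB (b₁ : X₁ → X₁ → ℝ) (b₂ : X₂ → X₂ → ℝ) (m₁ : X₁ → ℝ) (m₂ : X₂ → ℝ) :
    X₁ × X₂ → X₁ × X₂ → ℝ :=
  fun x y => (if x.2 = y.2 then b₁ x.1 y.1 * m₂ x.2 else 0) +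
             (if x.1 = y.1 then b₂ x.2 y.2 * m₁ x.1 else 0)

/-- The magnetic potential of the product:
`θ(x,y) = θ₁(x₁,y₁)·1_{x₂=y₂} + θ₂(x₂,y₂)·1_{x₁=y₁}`. -/
def prodTheta (θ₁ : X₁ → X₁ → ℝ) (θ₂ : X₂ → X₂ → ℝ) :
    X₁ × X₂ → X₁ × X₂ → ℝ :=
  fun x y => (if x.2 = y.2 then θ₁ x.1 y.1 else 0) +
             (if x.1 = y.1 then θ₂ x.2 y.2 else 0)

/-- The potential of the product: `q(x) = (q₁(x₁)+q₂(x₂))/μ(x)`. -/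
def prodQ (q₁ : X₁ → ℝ) (q₂ : X₂ → ℝ) (μ : X₁ × X₂ → ℝ) : X₁ × X₂ → ℝ :=
  fun x => (q₁ x.1 + q₂ x.2) / μ x

/-- The measure of the product: `m_μ(x) = μ(x)m₁(x₁)m₂(x₂)`. -/
def prodM (m₁ : X₁ → ℝ) (m₂ : X₂ → ℝ) (μ : X₁ × X₂ → ℝ) : X₁ × X₂ → ℝ :=
  fun x => μ x * m₁ x.1 * m₂ x.2

end Products

/-! Every edge of the product graph is either horizontal, `(x₁, x₂) ~ (y₁, x₂)` with weight
`b₁ x₁ y₁ · m₂ x₂` and phase `θ₁ x₁ y₁`, or vertical, with weight `b₂ x₂ y₂ · m₁ x₁` and phase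
`θ₂ x₂ y₂`; summing the horizontal edges fibre by fibre gives `Σ_{x₂} m₂ x₂ · (edge energy of
f(·, x₂))`, and symmetrically for the vertical ones. In the potential term `μ` cancels:
`q · m_μ = q₁ m₁ m₂ + q₂ m₁ m₂`. All rearrangements of the double series are justified because the
edge energy kernel is summable on pairs: it is dominated by `2 b(x, y) (|f x|² + |f y|²)`, and
`b` is symmetric with summable rows while `f` is finitely supported. -/

open Function

structure IsGraph (b : X → X → ℝ) : Prop where
  nonneg : ∀ x y, 0 ≤ b x y
  symm : ∀ x y, b x y = b y x
  diag : ∀ x, b x x = 0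
  summable_row : ∀ x, Summable (b x)

lemma IsMagneticGraph.isGraph {b θ : X → X → ℝ} {m : X → ℝ} (h : IsMagneticGraph b θ m) :
    IsGraph b :=
  ⟨h.1, h.2.1, h.2.2.1, h.2.2.2.1⟩

lemma IsMagneticGraph.measure_pos {b θ : X → X → ℝ} {m : X → ℝ} (h : IsMagneticGraph b θ m)
    (x : X) : 0 < m x :=
  h.2.2.2.2.2 x

section MagneticEdge

def magEdge (b θ : X → X → ℝ) (f : X → ℂ) (x y : X) : ℝ :=
  b x y * ‖f x - exp ((θ x y : ℂ) * I) * f y‖ ^ 2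

lemma Qform_two (b θ : X → X → ℝ) (q m : X → ℝ) (f : X → ℂ) :
    Qform b θ q m 2 f =
      1 / 2 * ∑' x, ∑' y, magEdge b θ f x y + ∑' x, q x * ‖f x‖ ^ 2 * m x := by
  simp only [Qform, magEdge, Real.rpow_two]

lemma magEdge_le {b : X → X → ℝ} (θ : X → X → ℝ) (f : X → ℂ) {x y : X} (hb : 0 ≤ b x y) :
    magEdge b θ f x y ≤ b x y * (2 * ‖f x‖ ^ 2) + b x y * (2 * ‖f y‖ ^ 2) := by
  rw [magEdge, ← mul_add]
  gcongr
  calc ‖f x - exp ((θ x y : ℂ) * I) * f y‖ ^ 2 ≤ (‖f x‖ + ‖f y‖) ^ 2 := by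
        gcongr
        simpa [norm_mul, norm_exp_ofReal_mul_I] using
          norm_sub_le (f x) (exp ((θ x y : ℂ) * I) * f y)
    _ ≤ 2 * ‖f x‖ ^ 2 + 2 * ‖f y‖ ^ 2 := by nlinarith [add_sq_le (a := ‖f x‖) (b := ‖f y‖)]

lemma IsGraph.summable_mul_of_support_finite {b : X → X → ℝ} (hb : IsGraph b) {g : X → ℝ}
    (hg : ∀ x, 0 ≤ g x) (hgs : (support g).Finite) :
    Summable fun p : X × X => b p.1 p.2 * g p.1 := by
  rw [summable_prod_of_nonneg fun p => mul_nonneg (hb.nonneg _ _) (hg _)]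
  refine ⟨fun x => (hb.summable_row x).mul_right (g x), summable_of_hasFiniteSupport ?_⟩
  refine hgs.subset fun x hx => ?_
  contrapose! hx
  simp [notMem_support.1 hx]

lemma IsGraph.summable_magEdge {b : X → X → ℝ} (hb : IsGraph b) (θ : X → X → ℝ) {f : X → ℂ}
    (hf : (support f).Finite) :
    Summable fun p : X × X => magEdge b θ f p.1 p.2 := by
  have hg : (support fun x => 2 * ‖f x‖ ^ 2).Finite :=
    hf.subset fun x hx => by contrapose! hx; simp [notMem_support.1 hx]
  have hleft := hb.summable_mul_of_support_finite (fun x => by positivity) hg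
  have hright : Summable fun p : X × X => b p.1 p.2 * (2 * ‖f p.2‖ ^ 2) := by
    refine (hleft.comp_injective Prod.swap_injective).congr fun p => ?_
    simp only [comp_apply, Prod.fst_swap, Prod.snd_swap, hb.symm p.2 p.1]
  exact (hleft.add hright).of_nonneg_of_le
    (fun p => mul_nonneg (hb.nonneg _ _) (sq_nonneg _)) fun p => magEdge_le θ f (hb.nonneg _ _)

lemma tsum_Qform_two_mul {Y : Type*} (b θ : X → X → ℝ) (q m : X → ℝ) {g : Y → X → ℂ}
    (hg : (support g).Finite) (w : Y → ℝ) :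
    ∑' y, Qform b θ q m 2 (g y) * w y =
      1 / 2 * ∑' y, (∑' x, ∑' x', magEdge b θ (g y) x x') * w y +
        ∑' y, (∑' x, q x * ‖g y x‖ ^ 2 * m x) * w y := by
  have hsum (Φ : (X → ℂ) → ℝ) (hΦ : Φ 0 = 0) : Summable fun y => Φ (g y) * w y :=
    summable_of_hasFiniteSupport <| hg.subset fun y hy => by
      contrapose! hy
      simp [notMem_support.1 hy, hΦ]
  have hedge := hsum (fun h => ∑' x, ∑' x', magEdge b θ h x x') (by simp [magEdge])
  have hpot := hsum (fun h => ∑' x, q x * ‖h x‖ ^ 2 * m x) (by simp)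
  calc ∑' y, Qform b θ q m 2 (g y) * w y
      = ∑' y, (1 / 2 * ((∑' x, ∑' x', magEdge b θ (g y) x x') * w y) +
          (∑' x, q x * ‖g y x‖ ^ 2 * m x) * w y) :=
        tsum_congr fun y => by rw [Qform_two]; ring
    _ = _ := by rw [(hedge.mul_left _).tsum_add hpot, tsum_mul_left]

end MagneticEdge

section Fibres

variable {X₁ X₂ : Type*}

lemma ite_snd_eq_zero_of_notMem_range {x₂ : X₂} {F : X₁ × X₂ → ℝ} {y : X₁ × X₂}
    (hy : y ∉ Set.range fun y₁ => (y₁, x₂)) : (if x₂ = y.2 then F y else 0) = 0 :=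
  if_neg fun h => hy ⟨y.1, by rw [h]⟩

lemma tsum_ite_snd_eq (x₂ : X₂) (F : X₁ × X₂ → ℝ) :
    ∑' y : X₁ × X₂, (if x₂ = y.2 then F y else 0) = ∑' y₁, F (y₁, x₂) := by
  refine (Injective.tsum_eq (g := fun y₁ => (y₁, x₂)) (fun _ _ h => congrArg Prod.fst h)
    fun y hy => ?_).symm.trans (by simp)
  by_contra hy'
  exact hy (ite_snd_eq_zero_of_notMem_range hy')

lemma summable_ite_snd_iff (x₂ : X₂) (F : X₁ × X₂ → ℝ) :
    (Summable fun y : X₁ × X₂ => if x₂ = y.2 then F y else 0) ↔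
      Summable fun y₁ => F (y₁, x₂) := by
  refine (Injective.summable_iff (g := fun y₁ => (y₁, x₂)) (fun _ _ h => congrArg Prod.fst h)
    fun y hy => ite_snd_eq_zero_of_notMem_range hy).symm.trans ?_
  simp [comp_def]

lemma tsum_ite_fst_eq (x₁ : X₁) (F : X₁ × X₂ → ℝ) :
    ∑' y : X₁ × X₂, (if x₁ = y.1 then F y else 0) = ∑' y₂, F (x₁, y₂) :=
  ((Equiv.prodComm X₂ X₁).tsum_eq _).symm.trans (tsum_ite_snd_eq x₁ (F ∘ Prod.swap))

lemma summable_ite_fst_iff (x₁ : X₁) (F : X₁ × X₂ → ℝ) :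
    (Summable fun y : X₁ × X₂ => if x₁ = y.1 then F y else 0) ↔
      Summable fun y₂ => F (x₁, y₂) :=
  (Equiv.prodComm X₂ X₁).summable_iff.symm.trans (summable_ite_snd_iff x₁ (F ∘ Prod.swap))

lemma Summable.tsum_prod_swap {F : X₁ × X₂ → ℝ} (hF : Summable F) :
    ∑' x, F x = ∑' x₂, ∑' x₁, F (x₁, x₂) :=
  hF.tsum_prod.trans (hF.tsum_comm (f := fun x₁ x₂ => F (x₁, x₂))).symm

lemma tsum_tsum_ite_snd {F : X₁ × X₂ → X₁ → ℝ}
    (hF : Summable fun p : (X₁ × X₂) × (X₁ × X₂) => if p.1.2 = p.2.2 then F p.1 p.2.1 else 0) :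
    ∑' x : X₁ × X₂, ∑' y : X₁ × X₂, (if x.2 = y.2 then F x y.1 else 0) =
      ∑' x₂, ∑' x₁, ∑' y₁, F (x₁, x₂) y₁ := by
  have hfibre := hF.prod
  simp only [tsum_ite_snd_eq] at hfibre ⊢
  exact hfibre.tsum_prod_swap

lemma tsum_tsum_ite_fst {F : X₁ × X₂ → X₂ → ℝ}
    (hF : Summable fun p : (X₁ × X₂) × (X₁ × X₂) => if p.1.1 = p.2.1 then F p.1 p.2.2 else 0) :
    ∑' x : X₁ × X₂, ∑' y : X₁ × X₂, (if x.1 = y.1 then F x y.2 else 0) =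
      ∑' x₁, ∑' x₂, ∑' y₂, F (x₁, x₂) y₂ := by
  have hfibre := hF.prod
  simp only [tsum_ite_fst_eq] at hfibre ⊢
  exact hfibre.tsum_prod

lemma finite_support_slice_snd {M : Type*} [Zero M] {f : X₁ × X₂ → M} (hf : (support f).Finite) :
    (support fun x₂ x₁ => f (x₁, x₂)).Finite := by
  refine (hf.image Prod.snd).subset fun x₂ hx₂ => ?_
  obtain ⟨x₁, hx₁⟩ := ne_iff.1 hx₂
  exact ⟨(x₁, x₂), hx₁, rfl⟩

lemma finite_support_slice_fst {M : Type*} [Zero M] {f : X₁ × X₂ → M} (hf : (support f).Finite) :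
    (support fun x₁ x₂ => f (x₁, x₂)).Finite := by
  refine (hf.image Prod.fst).subset fun x₁ hx₁ => ?_
  obtain ⟨x₂, hx₂⟩ := ne_iff.1 hx₁
  exact ⟨(x₁, x₂), hx₂, rfl⟩

end Fibres

section Product

variable {X₁ X₂ : Type*} {b₁ : X₁ → X₁ → ℝ} {b₂ : X₂ → X₂ → ℝ} {m₁ : X₁ → ℝ} {m₂ : X₂ → ℝ}

lemma IsGraph.prod (h₁ : IsGraph b₁) (h₂ : IsGraph b₂) (hm₁ : ∀ x, 0 ≤ m₁ x)
    (hm₂ : ∀ x, 0 ≤ m₂ x) : IsGraph (prodB b₁ b₂ m₁ m₂) where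
  nonneg x y := by
    unfold prodB
    refine add_nonneg ?_ ?_ <;> split_ifs
    exacts [mul_nonneg (h₁.nonneg _ _) (hm₂ _), le_rfl, mul_nonneg (h₂.nonneg _ _) (hm₁ _), le_rfl]
  symm x y := by
    unfold prodB
    by_cases h : x.2 = y.2 <;> by_cases h' : x.1 = y.1 <;>
      simp [h, h', Ne.symm, h₁.symm x.1, h₂.symm x.2]
  diag x := by simp [prodB, h₁.diag, h₂.diag]
  summable_row x := by
    unfold prodB
    refine Summable.add ?_ ?_
    · exact (summable_ite_snd_iff x.2 _).2 ((h₁.summable_row x.1).mul_right _)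
    · exact (summable_ite_fst_iff x.1 _).2 ((h₂.summable_row x.2).mul_right _)

-- On the diagonal `prodTheta` is `θ₁ x₁ x₁ + θ₂ x₂ x₂`, which need not vanish mod `2π`;
-- the split is exact only because `b₁` and `b₂` vanish there.
lemma magEdge_prodB (hb₁ : ∀ x, b₁ x x = 0) (hb₂ : ∀ x, b₂ x x = 0) (θ₁ : X₁ → X₁ → ℝ)
    (θ₂ : X₂ → X₂ → ℝ) (f : X₁ × X₂ → ℂ) (x y : X₁ × X₂) :
    magEdge (prodB b₁ b₂ m₁ m₂) (prodTheta θ₁ θ₂) f x y =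
      (if x.2 = y.2 then magEdge b₁ θ₁ (fun z₁ => f (z₁, x.2)) x.1 y.1 * m₂ x.2 else 0) +
        (if x.1 = y.1 then magEdge b₂ θ₂ (fun z₂ => f (x.1, z₂)) x.2 y.2 * m₁ x.1 else 0) := by
  obtain ⟨x₁, x₂⟩ := x
  obtain ⟨y₁, y₂⟩ := y
  by_cases h₁ : x₁ = y₁ <;> by_cases h₂ : x₂ = y₂ <;> subst_vars <;>
    simp [magEdge, prodB, prodTheta, *] <;> ring

lemma tsum_tsum_magEdge_prodB (h₁ : IsGraph b₁) (h₂ : IsGraph b₂) (hm₁ : ∀ x, 0 ≤ m₁ x)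
    (hm₂ : ∀ x, 0 ≤ m₂ x) (θ₁ : X₁ → X₁ → ℝ) (θ₂ : X₂ → X₂ → ℝ) {f : X₁ × X₂ → ℂ}
    (hf : (support f).Finite) :
    ∑' x, ∑' y, magEdge (prodB b₁ b₂ m₁ m₂) (prodTheta θ₁ θ₂) f x y =
      ∑' x₂, (∑' x₁, ∑' y₁, magEdge b₁ θ₁ (fun z₁ => f (z₁, x₂)) x₁ y₁) * m₂ x₂ +
        ∑' x₁, (∑' x₂, ∑' y₂, magEdge b₂ θ₂ (fun z₂ => f (x₁, z₂)) x₂ y₂) * m₁ x₁ := by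
  set F₁ : X₁ × X₂ → X₁ → ℝ := fun x y₁ =>
    magEdge b₁ θ₁ (fun z₁ => f (z₁, x.2)) x.1 y₁ * m₂ x.2 with hF₁
  set F₂ : X₁ × X₂ → X₂ → ℝ := fun x y₂ =>
    magEdge b₂ θ₂ (fun z₂ => f (x.1, z₂)) x.2 y₂ * m₁ x.1 with hF₂
  have hA₀ (x y : X₁ × X₂) : 0 ≤ if x.2 = y.2 then F₁ x y.1 else 0 :=
    ite_nonneg (mul_nonneg (mul_nonneg (h₁.nonneg _ _) (sq_nonneg _)) (hm₂ _)) le_rfl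
  have hB₀ (x y : X₁ × X₂) : 0 ≤ if x.1 = y.1 then F₂ x y.2 else 0 :=
    ite_nonneg (mul_nonneg (mul_nonneg (h₂.nonneg _ _) (sq_nonneg _)) (hm₁ _)) le_rfl
  have hsplit (x y : X₁ × X₂) : magEdge (prodB b₁ b₂ m₁ m₂) (prodTheta θ₁ θ₂) f x y =
      (if x.2 = y.2 then F₁ x y.1 else 0) + (if x.1 = y.1 then F₂ x y.2 else 0) :=
    magEdge_prodB h₁.diag h₂.diag θ₁ θ₂ f x y
  have hK := (h₁.prod h₂ hm₁ hm₂).summable_magEdge (prodTheta θ₁ θ₂) hf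
  have hA : Summable fun p : (X₁ × X₂) × (X₁ × X₂) => if p.1.2 = p.2.2 then F₁ p.1 p.2.1 else 0 :=
    hK.of_nonneg_of_le (fun p => hA₀ _ _) fun p => by
      rw [hsplit]
      exact le_add_of_nonneg_right (hB₀ _ _)
  have hB : Summable fun p : (X₁ × X₂) × (X₁ × X₂) => if p.1.1 = p.2.1 then F₂ p.1 p.2.2 else 0 :=
    hK.of_nonneg_of_le (fun p => hB₀ _ _) fun p => by
      rw [hsplit]
      exact le_add_of_nonneg_left (hA₀ _ _)
  calc ∑' x, ∑' y, magEdge (prodB b₁ b₂ m₁ m₂) (prodTheta θ₁ θ₂) f x y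
      = ∑' x, (∑' y : X₁ × X₂, (if x.2 = y.2 then F₁ x y.1 else 0) +
          ∑' y : X₁ × X₂, (if x.1 = y.1 then F₂ x y.2 else 0)) := tsum_congr fun x => by
        simp_rw [hsplit]
        exact (hA.prod_factor x).tsum_add (hB.prod_factor x)
    _ = ∑' x, ∑' y : X₁ × X₂, (if x.2 = y.2 then F₁ x y.1 else 0) +
          ∑' x, ∑' y : X₁ × X₂, (if x.1 = y.1 then F₂ x y.2 else 0) := hA.prod.tsum_add hB.prod
    _ = _ := by
      rw [tsum_tsum_ite_snd hA, tsum_tsum_ite_fst hB]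
      simp only [hF₁, hF₂, tsum_mul_right]

lemma tsum_prodQ_mul_prodM (q₁ : X₁ → ℝ) (q₂ : X₂ → ℝ) {μ : X₁ × X₂ → ℝ} (hμ : ∀ z, μ z ≠ 0)
    {f : X₁ × X₂ → ℂ} (hf : (support f).Finite) :
    ∑' x, prodQ q₁ q₂ μ x * ‖f x‖ ^ 2 * prodM m₁ m₂ μ x =
      ∑' x₂, (∑' x₁, q₁ x₁ * ‖f (x₁, x₂)‖ ^ 2 * m₁ x₁) * m₂ x₂ +
        ∑' x₁, (∑' x₂, q₂ x₂ * ‖f (x₁, x₂)‖ ^ 2 * m₂ x₂) * m₁ x₁ := by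
  have hsum (c : X₁ × X₂ → ℝ) : Summable fun x => c x * ‖f x‖ ^ 2 :=
    summable_of_hasFiniteSupport <| hf.subset fun x hx => by
      contrapose! hx
      simp [notMem_support.1 hx]
  have h₁ := hsum fun x => q₁ x.1 * m₁ x.1 * m₂ x.2
  have h₂ := hsum fun x => q₂ x.2 * m₂ x.2 * m₁ x.1
  calc ∑' x, prodQ q₁ q₂ μ x * ‖f x‖ ^ 2 * prodM m₁ m₂ μ x
      = ∑' x, (q₁ x.1 * m₁ x.1 * m₂ x.2 * ‖f x‖ ^ 2 + q₂ x.2 * m₂ x.2 * m₁ x.1 * ‖f x‖ ^ 2) :=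
        tsum_congr fun x => by
          simp only [prodQ, prodM]
          field_simp [hμ x]
    _ = _ := by
      rw [h₁.tsum_add h₂, h₁.tsum_prod_swap, h₂.tsum_prod]
      simp only [← tsum_mul_right]
      congr 1 <;> exact tsum_congr fun _ => tsum_congr fun _ => by ring

end Product

section ProductTheorems

variable {X₁ X₂ : Type*} [Countable X₁] [Countable X₂]

/-- the form of the product graph decomposes as
`Q_{2,θ}(f) = Σ_{x₂} Q_{2,θ₁}(f(·,x₂)) m₂(x₂) + Σ_{x₁} Q_{2,θ₂}(f(x₁,·)) m₁(x₁)`. -/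
theorem Qform_prod
    (b₁ θ₁ : X₁ → X₁ → ℝ) (q₁ m₁ : X₁ → ℝ) (hG₁ : IsMagneticGraph b₁ θ₁ m₁)
    (b₂ θ₂ : X₂ → X₂ → ℝ) (q₂ m₂ : X₂ → ℝ) (hG₂ : IsMagneticGraph b₂ θ₂ m₂)
    (μ : X₁ × X₂ → ℝ) (hμ : ∀ z, 0 < μ z)
    (f : X₁ × X₂ → ℂ) (hf : (Function.support f).Finite) :
    Qform (prodB b₁ b₂ m₁ m₂) (prodTheta θ₁ θ₂) (prodQ q₁ q₂ μ) (prodM m₁ m₂ μ) 2 f =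
      (∑' x₂ : X₂, Qform b₁ θ₁ q₁ m₁ 2 (fun x₁ => f (x₁, x₂)) * m₂ x₂) +
      (∑' x₁ : X₁, Qform b₂ θ₂ q₂ m₂ 2 (fun x₂ => f (x₁, x₂)) * m₁ x₁) := by
  have hm₁ : ∀ x, 0 ≤ m₁ x := fun x => (hG₁.measure_pos x).le
  have hm₂ : ∀ x, 0 ≤ m₂ x := fun x => (hG₂.measure_pos x).le
  rw [tsum_Qform_two_mul b₁ θ₁ q₁ m₁ (finite_support_slice_snd hf),
    tsum_Qform_two_mul b₂ θ₂ q₂ m₂ (finite_support_slice_fst hf), Qform_two,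
    tsum_tsum_magEdge_prodB hG₁.isGraph hG₂.isGraph hm₁ hm₂ θ₁ θ₂ hf,
    tsum_prodQ_mul_prodM q₁ q₂ (fun z => (hμ z).ne') hf]
  ring

end ProductTheorems
end
end

section
/- Let C = (b,θ,0,m) be a magnetic cycle of length n over a finite set Y with standard edge weights, and let W ⊆ Y. Then ι_{1,θ}(W) = s_θ(C) if W = Y, and ι_{1,θ}(W) = 0 if W ≠ Y. -/
open Complex MeasureTheory
open scoped Classical

noncomputable section

variable {X : Type*}

/-- Auxiliary: sum over `ZMod n` as a sum over `Finset.range n`. -/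
lemma sum_zmod_aux {n : ℕ} [NeZero n] {M : Type*} [AddCommMonoid M] (f : ZMod n → M) :
    ∑ j : ZMod n, f j = ∑ k ∈ Finset.range n, f (k : ZMod n) := by
  refine Finset.sum_bij' (fun (a : ZMod n) _ => a.val) (fun (b : ℕ) _ => (b : ZMod n))
    (fun a _ => Finset.mem_range.mpr a.val_lt) (fun b _ => Finset.mem_univ _)
    (fun a _ => ZMod.natCast_rightInverse a)
    (fun b hb => ZMod.val_cast_of_lt (Finset.mem_range.mp hb))
    (fun a _ => by rw [ZMod.natCast_rightInverse a])

lemma exp_step_aux (A ψ : ℝ) : Complex.exp ((ψ:ℂ) * I) * Complex.exp (((-(A+ψ) : ℝ):ℂ) * I) =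
    Complex.exp (((-A : ℝ):ℂ)*I) := by
  rw [← Complex.exp_add]; congr 1; push_cast; ring

lemma norm_exp_sub_aux (a b : ℝ) : ‖Complex.exp ((a:ℂ)*I) - Complex.exp ((b:ℂ)*I)‖ =
    ‖(1:ℂ) - Complex.exp (((b-a:ℝ):ℂ)*I)‖ := by
  have h : Complex.exp ((a:ℂ)*I) - Complex.exp ((b:ℂ)*I)
      = Complex.exp ((a:ℂ)*I) * (1 - Complex.exp (((b-a:ℝ):ℂ)*I)) := by
    rw [mul_sub, mul_one, ← Complex.exp_add]; congr 2; push_cast; ring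
  rw [h, norm_mul, Complex.norm_exp_ofReal_mul_I, one_mul]

lemma exp_antisym_aux {a b : ℝ} (h : ∃ k : ℤ, a + b = 2 * Real.pi * k) :
    Complex.exp ((a:ℂ) * I) * Complex.exp ((b:ℂ) * I) = 1 := by
  obtain ⟨k, hk⟩ := h
  rw [← Complex.exp_add, ← add_mul, ← Complex.ofReal_add, hk]
  have h2 : ((2 * Real.pi * k : ℝ) : ℂ) * I = k * (2 * Real.pi * I) := by push_cast; ring
  rw [h2, Complex.exp_int_mul_two_pi_mul_I]

lemma norm_term_symm_aux {a b : ℝ} (h : ∃ k : ℤ, a + b = 2 * Real.pi * k) (u v : ℂ) :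
    ‖u - Complex.exp ((a:ℂ) * I) * v‖ = ‖v - Complex.exp ((b:ℂ) * I) * u‖ := by
  have h1 : ‖v - Complex.exp ((b:ℂ)*I) * u‖
      = ‖Complex.exp ((a:ℂ)*I) * (v - Complex.exp ((b:ℂ)*I) * u)‖ := by
    rw [norm_mul, Complex.norm_exp_ofReal_mul_I, one_mul]
  rw [h1, mul_sub, ← mul_assoc, exp_antisym_aux h, one_mul, norm_sub_rev]

/-- for a magnetic cycle of length `n` with standard edge weights,
`ι_{1,θ}(W) = s_θ(C)` if `W = Y` and `ι_{1,θ}(W) = 0` otherwise, where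
`s_θ(C) = |1 − e^{iF_θ(C)}|` and `F_θ(C) = Σ_j θ(x_j, x_{j+1})` is the magnetic flux. -/
theorem frust_one_cycle (n : ℕ) [NeZero n] (hn : 3 ≤ n)
    {Y : Type*} [Fintype Y] (Φ : Y ≃ ZMod n)
    (b θ : Y → Y → ℝ) (m : Y → ℝ)
    (hb : ∀ x y, b x y = if (Φ x - Φ y = 1 ∨ Φ x - Φ y = -1) then 1 else 0)
    (hG : IsMagneticGraph b θ m)
    (W : Finset Y) :
    frust b θ 1 W =
      if W = Finset.univ then
        ‖(1 : ℂ) - Complex.exp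
          (((∑ j : ZMod n, θ (Φ.symm j) (Φ.symm (j + 1)) : ℝ) : ℂ) * Complex.I)‖
      else 0 := by
  obtain ⟨hb0, hbsymm, hbdiag, hbsum, hθa, hm⟩ := hG
  have hfact : Fact (1 < n) := ⟨by omega⟩
  have hsym : ∀ (τ : Y → ℂ) (x y : Y),
      ‖τ x - Complex.exp ((θ x y : ℂ) * Complex.I) * τ y‖
      = ‖τ y - Complex.exp ((θ y x : ℂ) * Complex.I) * τ x‖ :=
    fun τ x y => norm_term_symm_aux (hθa x y) _ _
  set S : Set ℝ := {r : ℝ | ∃ τ : Y → ℂ, (∀ x ∈ W, ‖τ x‖ = 1) ∧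
    r = (1 / 2) * ∑ x ∈ W, ∑ y ∈ W,
      b x y * ‖τ x - Complex.exp ((θ x y : ℂ) * Complex.I) * τ y‖ ^ (1:ℝ)} with hS
  have hfr : frust b θ 1 W = sInf S := rfl
  have hnn : ∀ r ∈ S, 0 ≤ r := by
    rintro r ⟨τ, hτ, rfl⟩
    apply mul_nonneg (by norm_num)
    refine Finset.sum_nonneg fun x _ => Finset.sum_nonneg fun y _ =>
      mul_nonneg (by rw [hb]; split_ifs <;> norm_num)
        (Real.rpow_nonneg (norm_nonneg _) _)
  have hbdd : BddBelow S := ⟨0, fun r hr => hnn r hr⟩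
  rcases eq_or_ne W Finset.univ with hW | hW
  · -- W = univ
    subst hW
    rw [if_pos rfl]
    set ψ : ℕ → ℝ := fun k => θ (Φ.symm (k : ZMod n)) (Φ.symm ((k : ZMod n) + 1)) with hψ
    set F' : ℝ := ∑ l ∈ Finset.range n, ψ l with hF'
    have hF : (∑ j : ZMod n, θ (Φ.symm j) (Φ.symm (j + 1))) = F' :=
      sum_zmod_aux fun j => θ (Φ.symm j) (Φ.symm (j + 1))
    rw [hF, hfr]
    set c : ℝ := ‖(1 : ℂ) - Complex.exp ((F' : ℂ) * Complex.I)‖ with hc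
    -- reduction of the double sum
    have hred : ∀ τ : Y → ℂ,
        (∑ x : Y, ∑ y : Y, b x y * ‖τ x - Complex.exp ((θ x y : ℂ) * Complex.I) * τ y‖)
        = 2 * ∑ j : ZMod n, ‖τ (Φ.symm j) -
            Complex.exp ((θ (Φ.symm j) (Φ.symm (j+1)) : ℂ) * Complex.I) * τ (Φ.symm (j+1))‖ := by
      intro τ
      set t : ZMod n → ZMod n → ℝ := fun i j =>
        ‖τ (Φ.symm i) - Complex.exp ((θ (Φ.symm i) (Φ.symm j) : ℂ) * Complex.I) * τ (Φ.symm j)‖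
        with ht
      have h20 : (2 : ZMod n) ≠ 0 := by
        intro h
        have h2 : ((2 : ℕ) : ZMod n) = 0 := by push_cast; exact h
        have hdvd := (ZMod.natCast_eq_zero_iff 2 n).mp h2
        have := Nat.le_of_dvd (by norm_num) hdvd
        omega
      have step1 : (∑ x : Y, ∑ y : Y, b x y * ‖τ x - Complex.exp ((θ x y : ℂ) * Complex.I) * τ y‖)
          = ∑ i : ZMod n, ∑ j : ZMod n,
              (if i - j = 1 ∨ i - j = -1 then (1:ℝ) else 0) * t i j := by
        rw [← Equiv.sum_comp Φ.symm (fun x => ∑ y : Y,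
          b x y * ‖τ x - Complex.exp ((θ x y : ℂ) * Complex.I) * τ y‖)]
        refine Finset.sum_congr rfl fun i _ => ?_
        rw [← Equiv.sum_comp Φ.symm (fun y => b (Φ.symm i) y *
          ‖τ (Φ.symm i) - Complex.exp ((θ (Φ.symm i) y : ℂ) * Complex.I) * τ y‖)]
        refine Finset.sum_congr rfl fun j _ => ?_
        rw [hb]
        simp only [Equiv.apply_symm_apply, ht]
      have inner : ∀ i : ZMod n,
          (∑ j : ZMod n, (if i - j = 1 ∨ i - j = -1 then (1:ℝ) else 0) * t i j)
          = t i (i-1) + t i (i+1) := by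
        intro i
        have hne : (i - 1 : ZMod n) ≠ i + 1 := by
          intro h; exact h20 (by linear_combination -h)
        have hsplit : ∀ j : ZMod n, (if i - j = 1 ∨ i - j = -1 then (1:ℝ) else 0) * t i j
            = (if j = i - 1 then t i j else 0) + (if j = i + 1 then t i j else 0) := by
          intro j
          have e1 : (i - j = 1) ↔ j = i - 1 :=
            ⟨fun h => by linear_combination -h, fun h => by linear_combination -h⟩
          have e2 : (i - j = -1) ↔ j = i + 1 :=
            ⟨fun h => by linear_combination -h, fun h => by linear_combination -h⟩
          simp only [e1, e2]
          by_cases h1 : j = i - 1 <;> by_cases h2 : j = i + 1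
          · exact absurd (h1 ▸ h2) hne
          · simp [h1, h2, hne, hne.symm]
          · simp [h1, h2, hne, hne.symm]
          · simp [h1, h2, hne, hne.symm]
        rw [Finset.sum_congr rfl fun j _ => hsplit j, Finset.sum_add_distrib,
          Finset.sum_ite_eq' Finset.univ (i-1) (t i), Finset.sum_ite_eq' Finset.univ (i+1) (t i)]
        simp
      rw [step1, Finset.sum_congr rfl fun i _ => inner i, Finset.sum_add_distrib]
      have hre : (∑ i : ZMod n, t i (i-1)) = ∑ i : ZMod n, t i (i+1) := by
        rw [← Equiv.sum_comp (Equiv.addRight (1 : ZMod n)) (fun i => t i (i-1))]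
        refine Finset.sum_congr rfl fun i _ => ?_
        have h1 : ((Equiv.addRight (1 : ZMod n)) i - 1) = i := by
          simp [Equiv.coe_addRight]
        rw [h1]
        show t (i + 1) i = t i (i + 1)
        simp only [ht]
        exact hsym τ _ _
      rw [hre]; ring
    -- lower bound
    have hlow : ∀ τ : Y → ℂ, ‖τ (Φ.symm 0)‖ = 1 →
        c ≤ ∑ j : ZMod n, ‖τ (Φ.symm j) -
          Complex.exp ((θ (Φ.symm j) (Φ.symm (j+1)) : ℂ) * Complex.I) * τ (Φ.symm (j+1))‖ := by
      intro τ hτ0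
      rw [sum_zmod_aux]
      set f : ℕ → ℂ := fun k =>
        Complex.exp (((∑ l ∈ Finset.range k, ψ l : ℝ) : ℂ) * Complex.I) * τ (Φ.symm (k : ZMod n))
        with hf
      have hstep : ∀ k : ℕ, dist (f k) (f (k+1)) = ‖τ (Φ.symm (k : ZMod n)) -
          Complex.exp ((ψ k : ℂ) * Complex.I) * τ (Φ.symm ((k : ZMod n) + 1))‖ := by
        intro k
        have hfk1 : f (k+1) = Complex.exp (((∑ l ∈ Finset.range k, ψ l : ℝ) : ℂ) * Complex.I) *
            (Complex.exp ((ψ k : ℂ) * Complex.I) * τ (Φ.symm ((k : ZMod n) + 1))) := by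
          simp only [hf, Finset.sum_range_succ]
          push_cast
          rw [add_mul, Complex.exp_add]
          ring
        rw [dist_eq_norm, hfk1]
        simp only [hf]
        rw [← mul_sub, norm_mul, Complex.norm_exp_ofReal_mul_I, one_mul]
      have hd := dist_le_range_sum_dist f n
      have h0n : dist (f 0) (f n) = c := by
        have hfn : f n = Complex.exp ((F' : ℂ) * Complex.I) * τ (Φ.symm 0) := by
          simp only [hf, ZMod.natCast_self, hF']
        have hf0 : f 0 = τ (Φ.symm 0) := by
          simp [hf]
        rw [dist_eq_norm, hf0, hfn, hc]
        have heq : τ (Φ.symm 0) - Complex.exp ((F' : ℂ) * Complex.I) * τ (Φ.symm 0)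
            = (1 - Complex.exp ((F' : ℂ) * Complex.I)) * τ (Φ.symm 0) := by ring
        rw [heq, norm_mul, hτ0, mul_one]
      calc c = dist (f 0) (f n) := h0n.symm
        _ ≤ ∑ k ∈ Finset.range n, dist (f k) (f (k+1)) := hd
        _ = _ := Finset.sum_congr rfl fun k _ => hstep k
    -- the optimal witness
    set τ₀ : Y → ℂ := fun x =>
      Complex.exp (((-(∑ l ∈ Finset.range (Φ x).val, ψ l) : ℝ) : ℂ) * Complex.I) with hτ₀
    have hτ₀n : ∀ x : Y, ‖τ₀ x‖ = 1 := fun x => Complex.norm_exp_ofReal_mul_I _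
    have hτval : ∀ k : ℕ, k < n → τ₀ (Φ.symm (k : ZMod n)) =
        Complex.exp (((-(∑ l ∈ Finset.range k, ψ l) : ℝ) : ℂ) * Complex.I) := by
      intro k hk
      simp only [hτ₀, Equiv.apply_symm_apply, ZMod.val_cast_of_lt hk]
    have hwit : (∑ j : ZMod n, ‖τ₀ (Φ.symm j) -
        Complex.exp ((θ (Φ.symm j) (Φ.symm (j+1)) : ℂ) * Complex.I) * τ₀ (Φ.symm (j+1))‖) = c := by
      rw [sum_zmod_aux]
      rw [Finset.sum_eq_single_of_mem (n-1) (Finset.mem_range.mpr (by omega))]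
      · -- value at n - 1
        have hcast : (((n-1 : ℕ) : ZMod n)) + 1 = 0 := by
          have h1 : (((n-1)+1 : ℕ) : ZMod n) = 0 := by
            rw [show (n-1)+1 = n from by omega, ZMod.natCast_self]
          push_cast at h1
          linear_combination h1
        have h0 : τ₀ (Φ.symm ((((n-1) : ℕ) : ZMod n) + 1)) = 1 := by
          rw [hcast]
          have h00 : ((0:ℕ) : ZMod n) = (0 : ZMod n) := by push_cast; ring
          rw [← h00, hτval 0 (by omega)]
          simp
        rw [h0, mul_one, hτval (n-1) (by omega)]
        show ‖Complex.exp (((-(∑ l ∈ Finset.range (n-1), ψ l) : ℝ) : ℂ) * Complex.I) -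
          Complex.exp ((ψ (n-1) : ℂ) * Complex.I)‖ = c
        rw [norm_exp_sub_aux (-(∑ l ∈ Finset.range (n-1), ψ l)) (ψ (n-1)), hc]
        congr 3
        rw [hF', show n = (n-1)+1 from by omega, Finset.sum_range_succ,
          show ((n-1)+1)-1 = n-1 from by omega]
        push_cast; ring
      · -- other terms vanish
        intro k hk hkne
        have hk' : k < n := Finset.mem_range.mp hk
        have hk1 : k + 1 < n := by omega
        have hcast : ((k : ZMod n) + 1) = ((k+1 : ℕ) : ZMod n) := by push_cast; ring
        have h1 : τ₀ (Φ.symm ((k : ZMod n) + 1)) = Complex.exp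
            (((-(∑ l ∈ Finset.range (k+1), ψ l) : ℝ) : ℂ) * Complex.I) := by
          rw [hcast, hτval (k+1) hk1]
        rw [h1, hτval k hk', Finset.sum_range_succ]
        show ‖Complex.exp (((-(∑ l ∈ Finset.range k, ψ l) : ℝ) : ℂ) * Complex.I) -
          Complex.exp ((ψ k : ℂ) * Complex.I) *
          Complex.exp (((-((∑ l ∈ Finset.range k, ψ l) + ψ k) : ℝ) : ℂ) * Complex.I)‖ = 0
        rw [exp_step_aux, sub_self, norm_zero]
    refine le_antisymm (csInf_le hbdd ?_) (le_csInf ?_ ?_)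
    · refine ⟨τ₀, fun x _ => hτ₀n x, ?_⟩
      simp only [Real.rpow_one]
      rw [show (∑ x ∈ Finset.univ, ∑ y ∈ Finset.univ, b x y *
        ‖τ₀ x - Complex.exp ((θ x y : ℂ) * Complex.I) * τ₀ y‖) = 2 * _ from hred τ₀, hwit]
      ring
    · exact ⟨c, τ₀, fun x _ => hτ₀n x, by
        simp only [Real.rpow_one]
        rw [show (∑ x ∈ Finset.univ, ∑ y ∈ Finset.univ, b x y *
          ‖τ₀ x - Complex.exp ((θ x y : ℂ) * Complex.I) * τ₀ y‖) = 2 * _ from hred τ₀, hwit]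
        ring⟩
    · rintro r ⟨τ, hτ, rfl⟩
      simp only [Real.rpow_one]
      rw [show (∑ x ∈ Finset.univ, ∑ y ∈ Finset.univ, b x y *
        ‖τ x - Complex.exp ((θ x y : ℂ) * Complex.I) * τ y‖) = 2 * _ from hred τ]
      have := hlow τ (hτ _ (Finset.mem_univ _))
      linarith
  · -- W ≠ univ
    rw [if_neg hW, hfr]
    have hex : ∃ y₀, y₀ ∉ W := by
      by_contra hcon
      push_neg at hcon
      exact hW (Finset.eq_univ_iff_forall.mpr hcon)
    obtain ⟨y₀, hy₀⟩ := hex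
    set ψ' : ℕ → ℝ := fun k => θ (Φ.symm (Φ y₀ + k)) (Φ.symm (Φ y₀ + k + 1)) with hψ'
    set τ₁ : Y → ℂ := fun x =>
      Complex.exp (((-(∑ l ∈ Finset.range (Φ x - Φ y₀).val, ψ' l) : ℝ) : ℂ) * Complex.I) with hτ₁
    have hτ₁n : ∀ x : Y, ‖τ₁ x‖ = 1 := fun x => Complex.norm_exp_ofReal_mul_I _
    have key : ∀ x ∈ W, ∀ y ∈ W, Φ y - Φ x = 1 →
        τ₁ x - Complex.exp ((θ x y : ℂ) * Complex.I) * τ₁ y = 0 := by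
      intro x hx y hy hxy
      set a : ZMod n := Φ x - Φ y₀ with ha
      have hane : a ≠ -1 := by
        intro h
        have hyy : Φ y = Φ y₀ := by linear_combination hxy + h
        exact hy₀ (by rwa [← Φ.injective hyy])
      have havne : a.val ≠ n - 1 := by
        intro h
        apply hane
        have h1 : a = ((a.val : ℕ) : ZMod n) := (ZMod.natCast_rightInverse a).symm
        rw [h1, h]
        have hn1 : (1:ℕ) ≤ n := by omega
        push_cast [hn1]
        rw [ZMod.natCast_self]; ring
      have hval : (a + 1).val = a.val + 1 := by
        have h1 : (1 : ZMod n).val = 1 := ZMod.val_one n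
        have h2 : a.val + (1 : ZMod n).val < n := by
          rw [h1]; have := a.val_lt; omega
        rw [ZMod.val_add_of_lt h2, h1]
      have hYa : Φ y₀ + ((a.val : ℕ) : ZMod n) = Φ x := by
        rw [ZMod.natCast_rightInverse a, ha]; ring
      have e3 : θ x y = ψ' a.val := by
        simp only [hψ']
        rw [hYa, show Φ x + 1 = Φ y from by linear_combination -hxy, Equiv.symm_apply_apply,
          Equiv.symm_apply_apply]
      have e1 : τ₁ x = Complex.exp (((-(∑ l ∈ Finset.range a.val, ψ' l) : ℝ) : ℂ) * Complex.I) := by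
        simp only [hτ₁, ← ha]
      have e2 : τ₁ y = Complex.exp (((-((∑ l ∈ Finset.range a.val, ψ' l) + ψ' a.val) : ℝ) : ℂ) *
          Complex.I) := by
        simp only [hτ₁]
        rw [show Φ y - Φ y₀ = a + 1 from by rw [ha]; linear_combination hxy, hval,
          Finset.sum_range_succ]
      rw [e1, e2, e3, exp_step_aux, sub_self]
    have hzero : ∀ x ∈ W, ∀ y ∈ W,
        b x y * ‖τ₁ x - Complex.exp ((θ x y : ℂ) * Complex.I) * τ₁ y‖ ^ (1:ℝ) = 0 := by
      intro x hx y hy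
      rw [hb]
      by_cases hcd : Φ x - Φ y = 1 ∨ Φ x - Φ y = -1
      · rw [if_pos hcd, one_mul]
        rcases hcd with h | h
        · rw [hsym, key y hy x hx (by linear_combination h), norm_zero]
          simp
        · rw [key x hx y hy (by linear_combination -h), norm_zero]
          simp
      · rw [if_neg hcd, zero_mul]
    have h0mem : (0:ℝ) ∈ S := by
      refine ⟨τ₁, fun x _ => hτ₁n x, ?_⟩
      rw [Finset.sum_congr rfl fun x hx => Finset.sum_eq_zero fun y hy => hzero x hx y hy]
      simp
    exact le_antisymm (csInf_le hbdd h0mem) (le_csInf ⟨0, h0mem⟩ fun r hr => hnn r hr)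
end
end
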